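/- For every finitely supported f : ℕ → ℂ: (T_{1→m₁^f}^{−1}(Δ_{G₁^f}(T_{1→m₁^f} f)))(n) = (e^{1/2} + e^{−1/2})·f(n) − f(n−1) − f(n+1) for every n ≥ 1, and (T_{1→m₁^f}^{−1}(Δ_{G₁^f}(T_{1→m₁^f} f)))(0) = e^{1/2}·f(0) − f(1). Equivalently, on finitely supported functions, T_{1→m₁^f}^{−1} ∘ Δ_{G₁^f} ∘ T_{1→m₁^f} = Δ_ℕ + (1 − e^{−1/2})·𝟙₀ + (e^{1/2} + e^{−1/2} − 2)·Id. -/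

import Mathlib

/-!
The edge weight `e^{(2n+1)/2}` is the geometric mean `√(m(n) m(n+1))` of the vertex weights, so
conjugating by `T_{1→m}` makes every off-diagonal coefficient `E(x,y)/√(m(x) m(y))` equal to `1`.
The diagonal coefficient `∑_y E(x,y)/m(x)` is `e^{-1/2} + e^{1/2}` at `n ≥ 1` and `e^{1/2}` at the
endpoint `0`, which has only one neighbour.
-/

noncomputable section

open Complex

/-- The Laplacian of the weighted graph `(E, V, m)`. -/
def lap {V : Type*} (E : V → V → ℝ) (m : V → ℝ) (f : V → ℂ) : V → ℂ :=
  fun x => (1 / (m x : ℂ)) * ∑' y : V, ((E x y : ℝ) : ℂ) * (f x - f y)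

/-- Edge weights of the funnel half-line: `E₁^f(n, n+1) = e^{(2n+1)/2}`. -/
def e1F : ℕ → ℕ → ℝ := fun n k =>
  if k = n + 1 then Real.exp ((2 * (n : ℝ) + 1) / 2)
  else if n = k + 1 then Real.exp ((2 * (k : ℝ) + 1) / 2) else 0

/-- Weight of the funnel half-line: `m₁^f(n) = eⁿ`. -/
def m1F : ℕ → ℝ := fun n => Real.exp n

/-- The gauge transform `T_{m→m'} f = (x ↦ √(m(x)/m'(x))·f(x))`. -/
def Tw {V : Type*} (m m' : V → ℝ) (f : V → ℂ) : V → ℂ :=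
  fun x => (Real.sqrt (m x / m' x) : ℂ) * f x

/-- `(Δ_ℕ f)(n) = 2f(n) − f(n−1) − f(n+1)` for `n ≥ 1`, `(Δ_ℕ f)(0) = f(0) − f(1)`. -/
def deltaN (f : ℕ → ℂ) : ℕ → ℂ := fun n =>
  if n = 0 then f 0 - f 1 else 2 * f n - f (n - 1) - f (n + 1)

/-- `(𝟙₀ f)(n) = f(0)` if `n = 0`, and `0` otherwise. -/
def One0 (f : ℕ → ℂ) : ℕ → ℂ := fun n => if n = 0 then f 0 else 0

theorem lap_eq_sum {V : Type*} (E : V → V → ℝ) (m : V → ℝ) (f : V → ℂ) {x : V}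
    (s : Finset V) (hs : ∀ y ∉ s, E x y = 0) :
    lap E m f x = (1 / (m x : ℂ)) * ∑ y ∈ s, ((E x y : ℝ) : ℂ) * (f x - f y) := by
  rw [lap, tsum_eq_sum fun y hy => by simp [hs y hy]]

theorem Tw_lap_Tw_apply {V : Type*} (E : V → V → ℝ) (m : V → ℝ) (f : V → ℂ) {x : V}
    (hx : 0 < m x) (s : Finset V) (hs : ∀ y ∉ s, E x y = 0) :
    Tw m (fun _ => 1) (lap E m (Tw (fun _ => 1) m f)) x
      = ((∑ y ∈ s, E x y / m x : ℝ) : ℂ) * f x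
          - ∑ y ∈ s, ((E x y / Real.sqrt (m x * m y) : ℝ) : ℂ) * f y := by
  have hsx : (Real.sqrt (m x) : ℂ) ≠ 0 := ofReal_ne_zero.2 (Real.sqrt_pos.2 hx).ne'
  have hmx : (m x : ℂ) = (Real.sqrt (m x) : ℂ) ^ 2 := by
    rw [← ofReal_pow, Real.sq_sqrt hx.le]
  rw [Tw, lap_eq_sum E m _ s hs, ofReal_sum, Finset.sum_mul, Finset.mul_sum, Finset.mul_sum,
    ← Finset.sum_sub_distrib]
  refine Finset.sum_congr rfl fun y _ => ?_
  simp only [Tw, div_one, one_div, Real.sqrt_inv, Real.sqrt_mul hx.le]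
  push_cast
  rw [hmx]
  field_simp

theorem e1F_self_succ (n : ℕ) : e1F n (n + 1) = Real.exp ((2 * n + 1) / 2) := if_pos rfl

theorem e1F_succ_self (n : ℕ) : e1F (n + 1) n = Real.exp ((2 * n + 1) / 2) := by
  rw [e1F, if_neg (by omega), if_pos rfl]

theorem e1F_of_not_adj {n k : ℕ} (h₁ : k ≠ n + 1) (h₂ : n ≠ k + 1) : e1F n k = 0 := by
  rw [e1F, if_neg h₁, if_neg h₂]

theorem m1F_pos (n : ℕ) : 0 < m1F n := Real.exp_pos _

theorem sqrt_m1F_mul_m1F_succ (n : ℕ) :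
    Real.sqrt (m1F n * m1F (n + 1)) = Real.exp ((2 * n + 1) / 2) := by
  rw [Real.sqrt_eq_iff_mul_self_eq_of_pos (Real.exp_pos _), m1F, m1F, ← Real.exp_add,
    ← Real.exp_add]
  push_cast
  ring_nf

theorem e1F_self_succ_div_m1F (n : ℕ) : e1F n (n + 1) / m1F n = Real.exp (1 / 2) := by
  rw [e1F_self_succ, m1F, ← Real.exp_sub]
  ring_nf

theorem e1F_succ_self_div_m1F (n : ℕ) : e1F (n + 1) n / m1F (n + 1) = Real.exp (-(1 / 2)) := by
  rw [e1F_succ_self, m1F, ← Real.exp_sub]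
  push_cast
  ring_nf

theorem e1F_self_succ_div_sqrt (n : ℕ) :
    e1F n (n + 1) / Real.sqrt (m1F n * m1F (n + 1)) = 1 := by
  rw [sqrt_m1F_mul_m1F_succ, e1F_self_succ, div_self (Real.exp_pos _).ne']

theorem e1F_succ_self_div_sqrt (n : ℕ) :
    e1F (n + 1) n / Real.sqrt (m1F (n + 1) * m1F n) = 1 := by
  rw [mul_comm, sqrt_m1F_mul_m1F_succ, e1F_succ_self, div_self (Real.exp_pos _).ne']

theorem funnel_conj_zero (f : ℕ → ℂ) :
    Tw m1F (fun _ => 1) (lap e1F m1F (Tw (fun _ => 1) m1F f)) 0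
      = ((Real.exp (1 / 2) : ℝ) : ℂ) * f 0 - f 1 := by
  rw [Tw_lap_Tw_apply e1F m1F f (m1F_pos 0) {0 + 1}
    fun k hk => e1F_of_not_adj (by simpa using hk) (by omega)]
  rw [Finset.sum_singleton, Finset.sum_singleton, e1F_self_succ_div_m1F, e1F_self_succ_div_sqrt]
  simp

theorem funnel_conj_succ (f : ℕ → ℂ) (n : ℕ) :
    Tw m1F (fun _ => 1) (lap e1F m1F (Tw (fun _ => 1) m1F f)) (n + 1)
      = ((Real.exp (1 / 2) + Real.exp (-(1 / 2)) : ℝ) : ℂ) * f (n + 1) - f n - f (n + 2) := by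
  rw [Tw_lap_Tw_apply e1F m1F f (m1F_pos (n + 1)) {n, n + 1 + 1}
    fun k hk => e1F_of_not_adj (by simp at hk; omega) (by simp at hk; omega)]
  rw [Finset.sum_pair (by omega), Finset.sum_pair (by omega), e1F_succ_self_div_m1F,
    e1F_self_succ_div_m1F, e1F_succ_self_div_sqrt, e1F_self_succ_div_sqrt]
  push_cast
  ring

theorem stmt5_general (f : ℕ → ℂ) :
    (∀ n : ℕ, 1 ≤ n →
      Tw m1F (fun _ => 1) (lap e1F m1F (Tw (fun _ => 1) m1F f)) n
        = ((Real.exp (1 / 2) + Real.exp (-(1 / 2)) : ℝ) : ℂ) * f n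
            - f (n - 1) - f (n + 1)) ∧
    (Tw m1F (fun _ => 1) (lap e1F m1F (Tw (fun _ => 1) m1F f)) 0
        = ((Real.exp (1 / 2) : ℝ) : ℂ) * f 0 - f 1) ∧
    (∀ n : ℕ,
      Tw m1F (fun _ => 1) (lap e1F m1F (Tw (fun _ => 1) m1F f)) n
        = deltaN f n + ((1 - Real.exp (-(1 / 2)) : ℝ) : ℂ) * One0 f n
            + ((Real.exp (1 / 2) + Real.exp (-(1 / 2)) - 2 : ℝ) : ℂ) * f n) := by
  refine ⟨fun n hn => ?_, funnel_conj_zero f, fun n => ?_⟩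
  · obtain ⟨n, rfl⟩ := Nat.exists_eq_add_of_le' hn
    exact funnel_conj_succ f n
  · rcases n with _ | n
    · rw [funnel_conj_zero, deltaN, One0, if_pos rfl, if_pos rfl]
      push_cast
      ring
    · rw [funnel_conj_succ, deltaN, One0, if_neg n.succ_ne_zero, if_neg n.succ_ne_zero]
      push_cast
      ring

/-- **Gauge transform of the funnel half-line Laplacian:**
`T_{1→m₁^f}⁻¹ ∘ Δ_{G₁^f} ∘ T_{1→m₁^f} = Δ_ℕ + (1 − e^{−1/2})·𝟙₀ + (e^{1/2} + e^{−1/2} − 2)·Id`. -/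
theorem stmt5 (f : ℕ → ℂ) (hf : (Function.support f).Finite) :
    (∀ n : ℕ, 1 ≤ n →
      Tw m1F (fun _ => 1) (lap e1F m1F (Tw (fun _ => 1) m1F f)) n
        = ((Real.exp (1 / 2) + Real.exp (-(1 / 2)) : ℝ) : ℂ) * f n
            - f (n - 1) - f (n + 1)) ∧
    (Tw m1F (fun _ => 1) (lap e1F m1F (Tw (fun _ => 1) m1F f)) 0
        = ((Real.exp (1 / 2) : ℝ) : ℂ) * f 0 - f 1) ∧
    (∀ n : ℕ,
      Tw m1F (fun _ => 1) (lap e1F m1F (Tw (fun _ => 1) m1F f)) n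
        = deltaN f n + ((1 - Real.exp (-(1 / 2)) : ℝ) : ℂ) * One0 f n
            + ((Real.exp (1 / 2) + Real.exp (-(1 / 2)) - 2 : ℝ) : ℂ) * f n) :=
  stmt5_general f
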